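/- arXiv:1410.5160 — 2 statements merged into one kernel-verified Lean document; each statement's English description precedes it below -/
import Mathlib

section
/- Let $L$ be a field complete for a nontrivial multiplicative nonarchimedean norm, fix a real $p > 1$ and $r > 0$, and let $A$ be the ring of power series $x = \sum_{n=0}^\infty \varpi^n x_n$ over $L$ with $p^{-n}|x_n|^r \to 0$, equipped with the multiplicative norm $\lambda_r(x) = \max_n p^{-n}|x_n|^r$. Define $\deg(x)$ for nonzero $x$ to be the largest $n$ attaining the maximum in $\lambda_r(x)$. Then for nonzero $x, y \in A$, $\deg(xy) = \deg(x) + \deg(y)$. -/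
open Filter PowerSeries

/-- The decay condition defining the subring `A^r`: `p^{-n} |x_n|^r → 0`. -/
def decaysPS {L : Type*} [Field L] (ν : L → ℝ) (p r : ℝ) (x : PowerSeries L) : Prop :=
  Tendsto (fun n : ℕ => p ^ (-(n : ℝ)) * ν (PowerSeries.coeff n x) ^ r) atTop (nhds 0)

/-- The Gauss norm `λ_r(x) = sup_n p^{-n} |x_n|^r`. -/
noncomputable def gaussPS {L : Type*} [Field L] (ν : L → ℝ) (p r : ℝ)
    (x : PowerSeries L) : ℝ :=
  ⨆ n : ℕ, p ^ (-(n : ℝ)) * ν (PowerSeries.coeff n x) ^ r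

/-- `d` is the degree of `x`: the largest index attaining the maximum defining `λ_r(x)`. -/
def isDegPS {L : Type*} [Field L] (ν : L → ℝ) (p r : ℝ) (x : PowerSeries L) (d : ℕ) : Prop :=
  p ^ (-(d : ℝ)) * ν (PowerSeries.coeff d x) ^ r = gaussPS ν p r x ∧
    ∀ m : ℕ, p ^ (-(m : ℝ)) * ν (PowerSeries.coeff m x) ^ r = gaussPS ν p r x → m ≤ d

/-! Write `w_n(x) = p^{-n} |x_n|^r`, so that `λ_r(x) = sup_n w_n(x)`. Since `|·|` is
multiplicative, `w_{i+j}(x_i y_j) = w_i(x) w_j(y)`, and by the ultrametric inequality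
`w_m(xy) ≤ w_i(x) w_j(y)` for some `i + j = m`. If `i > deg x` or `j > deg y` the right side is
`< λ_r(x) λ_r(y)`; so in the coefficient of index `deg x + deg y` of `xy` the product of the two
dominant coefficients strictly outweighs every other term, whence `λ_r(xy) = λ_r(x) λ_r(y)` is
attained at `deg x + deg y` and at no larger index. -/

open Finset

def absoluteValueOfIsNonarchimedean {R : Type*} [Semiring R] (ν : R → ℝ)
    (hnonneg : ∀ a, 0 ≤ ν a) (hzero : ∀ a, ν a = 0 ↔ a = 0)
    (hmul : ∀ a b, ν (a * b) = ν a * ν b) (hadd : IsNonarchimedean ν) : AbsoluteValue R ℝ where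
  toFun := ν
  map_mul' := hmul
  nonneg' := hnonneg
  eq_zero' := hzero
  add_le' a b := (hadd a b).trans (max_le_add_of_nonneg (hnonneg a) (hnonneg b))

noncomputable def weightPS {R : Type*} [Semiring R] (ν : R → ℝ) (p r : ℝ) (x : PowerSeries R)
    (n : ℕ) : ℝ :=
  p ^ (-(n : ℝ)) * ν (coeff n x) ^ r

section GaussNorm

variable {L : Type*} [Field L] (v : AbsoluteValue L ℝ) {p r : ℝ} {x y : PowerSeries L}

lemma weightPS_nonneg (hp : 0 < p) (x : PowerSeries L) (n : ℕ) : 0 ≤ weightPS v p r x n :=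
  mul_nonneg (Real.rpow_nonneg hp.le _) (Real.rpow_nonneg (v.nonneg _) _)

lemma weightPS_le_gaussPS (hx : BddAbove (Set.range (weightPS v p r x))) (n : ℕ) :
    weightPS v p r x n ≤ gaussPS v p r x :=
  le_ciSup hx n

lemma weightPS_mul_weightPS (hp : 0 < p) (x y : PowerSeries L) (i j : ℕ) :
    weightPS v p r x i * weightPS v p r y j =
      p ^ (-((i + j : ℕ) : ℝ)) * v (coeff i x * coeff j y) ^ r := by
  rw [weightPS, weightPS, map_mul, Real.mul_rpow (v.nonneg _) (v.nonneg _), Nat.cast_add,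
    neg_add, Real.rpow_add hp]
  ring

lemma exists_weightPS_mul_le (hv : IsNonarchimedean v) (hp : 0 < p) (hr : 0 ≤ r)
    (x y : PowerSeries L) (m : ℕ) :
    ∃ q ∈ antidiagonal m,
      weightPS v p r (x * y) m ≤ weightPS v p r x q.1 * weightPS v p r y q.2 := by
  obtain ⟨q, hq, hle⟩ := hv.finset_image_add_of_nonempty
    (fun q : ℕ × ℕ => coeff q.1 x * coeff q.2 y) (t := antidiagonal m) ⟨(0, m), by simp⟩
  refine ⟨q, hq, ?_⟩
  rw [weightPS_mul_weightPS v hp, mem_antidiagonal.1 hq, weightPS, coeff_mul]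
  gcongr

lemma weightPS_mul_le_gaussPS_mul (hv : IsNonarchimedean v) (hp : 0 < p) (hr : 0 ≤ r)
    (hx : BddAbove (Set.range (weightPS v p r x))) (hy : BddAbove (Set.range (weightPS v p r y)))
    (m : ℕ) : weightPS v p r (x * y) m ≤ gaussPS v p r x * gaussPS v p r y := by
  obtain ⟨q, -, hle⟩ := exists_weightPS_mul_le v hv hp hr x y m
  exact hle.trans (mul_le_mul (weightPS_le_gaussPS v hx _) (weightPS_le_gaussPS v hy _)
    (weightPS_nonneg v hp _ _) ((weightPS_nonneg v hp _ _).trans (weightPS_le_gaussPS v hx 0)))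

lemma apply_lt_of_weightPS_mul_lt (hp : 0 < p) (hr : 0 < r) {i j k l : ℕ} (h : i + j = k + l)
    (hlt : weightPS v p r x i * weightPS v p r y j < weightPS v p r x k * weightPS v p r y l) :
    v (coeff i x * coeff j y) < v (coeff k x * coeff l y) := by
  rw [weightPS_mul_weightPS v hp, weightPS_mul_weightPS v hp, h] at hlt
  exact (Real.rpow_lt_rpow_iff (v.nonneg _) (v.nonneg _) hr).1
    (lt_of_mul_lt_mul_left hlt (Real.rpow_nonneg hp.le _))

namespace isDegPS

variable {v} {dx dy : ℕ}

lemma weightPS_eq (hdx : isDegPS v p r x dx) : weightPS v p r x dx = gaussPS v p r x :=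
  hdx.1

lemma gaussPS_pos (hp : 0 < p) (hx : BddAbove (Set.range (weightPS v p r x)))
    (hdx : isDegPS v p r x dx) : 0 < gaussPS v p r x := by
  by_contra! hle
  have hsucc : weightPS v p r x (dx + 1) = gaussPS v p r x :=
    le_antisymm (weightPS_le_gaussPS v hx _) (hle.trans (weightPS_nonneg v hp _ _))
  exact absurd (hdx.2 _ hsucc) (by omega)

lemma weightPS_lt (hx : BddAbove (Set.range (weightPS v p r x))) (hdx : isDegPS v p r x dx)
    {n : ℕ} (hn : dx < n) : weightPS v p r x n < gaussPS v p r x :=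
  (weightPS_le_gaussPS v hx n).lt_of_ne fun h => absurd (hdx.2 n h) (by omega)

lemma weightPS_mul_lt (hp : 0 < p) (hx : BddAbove (Set.range (weightPS v p r x)))
    (hy : BddAbove (Set.range (weightPS v p r y))) (hdx : isDegPS v p r x dx)
    (hdy : isDegPS v p r y dy) {i j : ℕ} (hij : dx < i ∨ dy < j) :
    weightPS v p r x i * weightPS v p r y j < gaussPS v p r x * gaussPS v p r y := by
  rcases hij with hi | hj
  · calc weightPS v p r x i * weightPS v p r y j ≤ weightPS v p r x i * gaussPS v p r y :=
          mul_le_mul_of_nonneg_left (weightPS_le_gaussPS v hy j) (weightPS_nonneg v hp x i)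
      _ < gaussPS v p r x * gaussPS v p r y :=
          mul_lt_mul_of_pos_right (hdx.weightPS_lt hx hi) (hdy.gaussPS_pos hp hy)
  · calc weightPS v p r x i * weightPS v p r y j ≤ gaussPS v p r x * weightPS v p r y j :=
          mul_le_mul_of_nonneg_right (weightPS_le_gaussPS v hx i) (weightPS_nonneg v hp y j)
      _ < gaussPS v p r x * gaussPS v p r y :=
          mul_lt_mul_of_pos_left (hdy.weightPS_lt hy hj) (hdx.gaussPS_pos hp hx)

lemma weightPS_mul_add (hv : IsNonarchimedean v) (hp : 0 < p) (hr : 0 < r)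
    (hx : BddAbove (Set.range (weightPS v p r x))) (hy : BddAbove (Set.range (weightPS v p r y)))
    (hdx : isDegPS v p r x dx) (hdy : isDegPS v p r y dy) :
    weightPS v p r (x * y) (dx + dy) = gaussPS v p r x * gaussPS v p r y := by
  have hdominant : v (coeff (dx + dy) (x * y)) = v (coeff dx x * coeff dy y) := by
    rw [coeff_mul]
    refine hv.apply_sum_eq_of_lt (fun a => (v.map_neg a).symm) (k := (dx, dy))
      (mem_antidiagonal.2 rfl)
      fun q hq hne => apply_lt_of_weightPS_mul_lt v hp hr (mem_antidiagonal.1 hq) ?_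
    rw [hdx.weightPS_eq, hdy.weightPS_eq]
    have hq' := mem_antidiagonal.1 hq
    rw [Ne, Prod.ext_iff] at hne
    exact weightPS_mul_lt hp hx hy hdx hdy (by omega)
  rw [weightPS, hdominant, ← weightPS_mul_weightPS v hp, hdx.weightPS_eq, hdy.weightPS_eq]

lemma gaussPS_mul (hv : IsNonarchimedean v) (hp : 0 < p) (hr : 0 < r)
    (hx : BddAbove (Set.range (weightPS v p r x))) (hy : BddAbove (Set.range (weightPS v p r y)))
    (hdx : isDegPS v p r x dx) (hdy : isDegPS v p r y dy) :
    gaussPS v p r (x * y) = gaussPS v p r x * gaussPS v p r y := by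
  have hbound := weightPS_mul_le_gaussPS_mul v hv hp hr.le hx hy
  refine le_antisymm (ciSup_le hbound) ?_
  rw [← hdx.weightPS_mul_add hv hp hr hx hy hdy]
  exact weightPS_le_gaussPS v ⟨_, Set.forall_mem_range.2 hbound⟩ _

theorem mul (hv : IsNonarchimedean v) (hp : 0 < p) (hr : 0 < r)
    (hx : BddAbove (Set.range (weightPS v p r x))) (hy : BddAbove (Set.range (weightPS v p r y)))
    (hdx : isDegPS v p r x dx) (hdy : isDegPS v p r y dy) :
    isDegPS v p r (x * y) (dx + dy) := by
  have hgauss := hdx.gaussPS_mul hv hp hr hx hy hdy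
  refine ⟨(hdx.weightPS_mul_add hv hp hr hx hy hdy).trans hgauss.symm, fun m hm => ?_⟩
  by_contra! hlt
  obtain ⟨q, hq, hle⟩ := exists_weightPS_mul_le v hv hp hr.le x y m
  have hq' := mem_antidiagonal.1 hq
  exact (hle.trans_lt (weightPS_mul_lt hp hx hy hdx hdy (by omega))).ne (hm.trans hgauss)

end isDegPS

end GaussNorm

theorem stmt_6_general {L : Type*} [Field L] (ν : L → ℝ)
    (hnonneg : ∀ a : L, 0 ≤ ν a)
    (hzero : ∀ a : L, ν a = 0 ↔ a = 0)
    (hmul : ∀ a b : L, ν (a * b) = ν a * ν b)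
    (hadd : ∀ a b : L, ν (a + b) ≤ max (ν a) (ν b))
    (p r : ℝ) (hp : 1 < p) (hr : 0 < r)
    (x y : PowerSeries L) (hx : decaysPS ν p r x) (hy : decaysPS ν p r y)
    (dx dy : ℕ)
    (hdx : isDegPS ν p r x dx) (hdy : isDegPS ν p r y dy) :
    isDegPS ν p r (x * y) (dx + dy) :=
  isDegPS.mul (v := absoluteValueOfIsNonarchimedean ν hnonneg hzero hmul hadd) hadd
    (zero_lt_one.trans hp) hr hx.bddAbove_range hy.bddAbove_range hdx hdy

/-- Additivity of degrees: for nonzero `x, y` in the ring of decaying power series over a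
complete nontrivially normed field, `deg (x*y) = deg x + deg y`. -/
theorem stmt_6 {L : Type*} [Field L] (ν : L → ℝ)
    (hnonneg : ∀ a : L, 0 ≤ ν a)
    (hzero : ∀ a : L, ν a = 0 ↔ a = 0)
    (hmul : ∀ a b : L, ν (a * b) = ν a * ν b)
    (hadd : ∀ a b : L, ν (a + b) ≤ max (ν a) (ν b))
    (hnontriv : ∃ a : L, a ≠ 0 ∧ ν a ≠ 1)
    (hcomplete : ∀ f : ℕ → L,
      (∀ ε : ℝ, 0 < ε → ∃ N : ℕ, ∀ m ≥ N, ∀ k ≥ N, ν (f m - f k) < ε) →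
      ∃ l : L, Tendsto (fun n => ν (f n - l)) atTop (nhds 0))
    (p r : ℝ) (hp : 1 < p) (hr : 0 < r)
    (x y : PowerSeries L) (hx : decaysPS ν p r x) (hy : decaysPS ν p r y)
    (hx0 : x ≠ 0) (hy0 : y ≠ 0) (dx dy : ℕ)
    (hdx : isDegPS ν p r x dx) (hdy : isDegPS ν p r y dy) :
    isDegPS ν p r (x * y) (dx + dy) :=
  stmt_6_general ν hnonneg hzero hmul hadd p r hp hr x y hx hy dx dy hdx hdy
end

section
/- Let $L$, $p$, $r$, $A$, $\lambda_r$, $\deg$ be as above. For all $x, y \in A$ with $x \neq 0$, there exist $z, w \in A$ with $y = zx + w$, $\lambda_r(w) \leq \lambda_r(y)$, and $\deg(w) < \deg(x)$ (with the convention $\deg(0) = -\infty$). Consequently $A$ is a Euclidean domain for $\deg$, hence a principal ideal domain. -/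
open Filter PowerSeries

/-!
Write `μ = ν ^ r`, again a nonarchimedean absolute value, and `ρ = p⁻¹`, so that `λ_r` is the
Gauss norm `sup_n μ(f_n) ρ^n`. Let `d = deg x`. Since `x_d X^d` dominates `x`, the ratio
`c = sup_{j > d} μ(x_j) ρ^j / λ(x)` is `< 1`. A step of long division by `x_d X^d`,
`f ↦ f - (f_{≥ d} / x_d X^d) x`, does not increase `λ`, and at each index `m ≥ d` it bounds the
new coefficient by `c` times the top part `sup_{n ≥ d} μ(f_n) ρ^n` of `f` or by the tail of `f`
beyond `m`. Iterating, the top parts decrease to a limit `ℓ ≤ c ℓ`, hence to `0`. The accumulated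
quotients then converge coefficientwise, as `L` is complete, to a decaying `z`, and `w = y - z x`
has no coefficient at an index `≥ d`, so `deg w < deg x`. Finally, a nonzero element of minimal
degree generates a nonzero ideal, so the ring is principal.
-/

open Topology Finset

theorem tendsto_nhds_zero_of_forall_eventually_le {u : ℕ → ℝ} (hu : ∀ n, 0 ≤ u n)
    (h : ∀ ε > 0, ∀ᶠ n in atTop, u n ≤ ε) : Tendsto u atTop (𝓝 0) :=
  tendsto_order.2 ⟨fun _ ha => .of_forall fun n => ha.trans_le (hu n),
    fun _ ha => (h _ (half_pos ha)).mono fun _ hn => hn.trans_lt (half_lt_self ha)⟩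

theorem exists_eq_iSup_of_tendsto_zero {u : ℕ → ℝ} (hu : Tendsto u atTop (𝓝 0))
    (hpos : 0 < ⨆ n, u n) : ∃ n, u n = ⨆ n, u n := by
  set S := ⨆ n, u n
  obtain ⟨N, hN⟩ := eventually_atTop.1 (hu.eventually_lt_const (half_pos hpos))
  obtain ⟨n₀, -, hn₀⟩ := (range (N + 1)).exists_max_image u ⟨0, by simp⟩
  have hS : S ≤ max (u n₀) (S / 2) := ciSup_le fun n => by
    rcases lt_or_ge n N with h | h
    · exact le_max_of_le_left (hn₀ n (mem_range.2 (by omega)))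
    · exact le_max_of_le_right (hN n h).le
  refine ⟨n₀, le_antisymm (le_ciSup hu.bddAbove_range n₀) ?_⟩
  rcases le_max_iff.1 hS with h | h
  · exact h
  · linarith

theorem exists_isGreatest_eq_iSup_of_tendsto_zero {u : ℕ → ℝ} (hu : Tendsto u atTop (𝓝 0))
    (hpos : 0 < ⨆ n, u n) : ∃ d, IsGreatest {n | u n = ⨆ n, u n} d := by
  obtain ⟨N, hN⟩ := eventually_atTop.1 (hu.eventually_lt_const hpos)
  refine BddAbove.exists_isGreatest_of_nonempty ⟨N, fun n hn => ?_⟩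
    (exists_eq_iSup_of_tendsto_zero hu hpos)
  by_contra h
  exact (hN n (by omega)).ne hn

theorem eventually_forall_le_of_tendsto_zero {g : ℕ → ℕ → ℝ} {a : ℕ → ℝ}
    (hg : ∀ l, Tendsto (g l) atTop (𝓝 0)) (hga : ∀ l k, g l k ≤ a l)
    (ha : Tendsto a atTop (𝓝 0)) {ε : ℝ} (hε : 0 < ε) :
    ∀ᶠ k in atTop, ∀ l, g l k ≤ ε := by
  obtain ⟨N, hN⟩ := eventually_atTop.1 (ha.eventually (ge_mem_nhds hε))
  filter_upwards [(range N).eventually_all.2 fun l _ => (hg l).eventually (ge_mem_nhds hε)]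
    with k hk l
  rcases lt_or_ge l N with h | h
  · exact hk l (mem_range.2 h)
  · exact (hga l k).trans (hN l h)

theorem tendsto_zero_of_antitone_of_le_max {u : ℕ → ℝ} {v : ℕ → ℕ → ℝ} {c : ℝ}
    (hu : Antitone u) (hu0 : ∀ i, 0 ≤ u i) (hc : c < 1)
    (hv : ∀ i, Tendsto (v i) atTop (𝓝 0)) (h : ∀ i j, u (i + j) ≤ max (c * u i) (v i j)) :
    Tendsto u atTop (𝓝 0) := by
  have hbdd : BddBelow (Set.range u) := ⟨0, by simpa [lowerBounds]⟩
  have hlim : Tendsto u atTop (𝓝 (⨅ i, u i)) := tendsto_atTop_ciInf hu hbdd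
  set ℓ := ⨅ i, u i
  have hℓ0 : 0 ≤ ℓ := le_ciInf hu0
  have hℓu : ∀ i, ℓ ≤ max (c * u i) 0 := fun i =>
    ge_of_tendsto (tendsto_const_nhds.max (hv i))
      (.of_forall fun j => (ciInf_le hbdd (i + j)).trans (h i j))
  have hℓ : ℓ ≤ max (c * ℓ) 0 :=
    ge_of_tendsto' ((hlim.const_mul c).max tendsto_const_nhds) hℓu
  have : ℓ = 0 := by
    rcases le_max_iff.1 hℓ with h | h <;> nlinarith
  rwa [this] at hlim

theorem IsNonarchimedean.absoluteValue_sum_le {R ι : Type*} [Semiring R] {μ : AbsoluteValue R ℝ}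
    (hμ : IsNonarchimedean μ) {s : Finset ι} {t : ι → R} {B : ℝ} (hB : 0 ≤ B)
    (h : ∀ i ∈ s, μ (t i) ≤ B) : μ (∑ i ∈ s, t i) ≤ B := by
  rcases s.eq_empty_or_nonempty with rfl | hs
  · simpa using hB
  · exact (hμ.apply_sum_le_sup hs).trans (sup'_le hs _ h)

theorem AbsoluteValue.le_of_tendsto_sub {R : Type*} [Ring R] (μ : AbsoluteValue R ℝ)
    {a : R} {u : ℕ → R} {B : ℕ → ℝ} {b : ℝ}
    (hu : Tendsto (fun i => μ (a - u i)) atTop (𝓝 0)) (huB : ∀ i, μ (u i) ≤ B i)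
    (hB : Tendsto B atTop (𝓝 b)) : μ a ≤ b :=
  ge_of_tendsto (by simpa using hu.add hB) <| .of_forall fun i =>
    calc μ a = μ (a - u i + u i) := by rw [sub_add_cancel]
      _ ≤ μ (a - u i) + B i := (μ.add_le _ _).trans (by gcongr; exact huB i)

/-- For nonarchimedean `μ`, this is equivalent to completeness. -/
def AbsoluteValue.IsSeriesComplete {R : Type*} [Ring R] (μ : AbsoluteValue R ℝ) : Prop :=
  ∀ t : ℕ → R, Tendsto (fun n => μ (t n)) atTop (𝓝 0) →
    ∃ s : R, Tendsto (fun n => μ (∑ i ∈ range n, t i - s)) atTop (𝓝 0)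

theorem IsPrincipalIdealRing.of_exists_eq_mul_add {R : Type*} [CommRing R] (deg : R → ℕ)
    (h : ∀ x y : R, x ≠ 0 → ∃ z w, y = z * x + w ∧ (w = 0 ∨ deg w < deg x)) :
    IsPrincipalIdealRing R := by
  refine ⟨fun I => ?_⟩
  by_cases hI : I = ⊥
  · exact hI ▸ bot_isPrincipal
  have hne : {a | a ∈ I ∧ a ≠ 0}.Nonempty := Submodule.exists_mem_ne_zero_of_ne_bot hI
  obtain ⟨haI, ha0⟩ := Function.argminOn_mem deg _ hne
  set a := Function.argminOn deg _ hne
  refine ⟨a, le_antisymm (fun b hb => ?_) ((Ideal.span_singleton_le_iff_mem I).2 haI)⟩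
  obtain ⟨z, w, rfl, hdeg⟩ := h a b ha0
  by_cases hw0 : w = 0
  · exact Ideal.mem_span_singleton'.2 ⟨z, by rw [hw0, add_zero]⟩
  have hw : w ∈ {a | a ∈ I ∧ a ≠ 0} :=
    ⟨by simpa using I.sub_mem hb (I.mul_mem_left z haI), hw0⟩
  exact absurd (hdeg.resolve_left hw0) (Function.not_lt_argminOn deg _ hw)

namespace PowerSeries

section Ring

variable {R : Type*} [Ring R] {μ : AbsoluteValue R ℝ} {ρ : ℝ} {f g : R⟦X⟧} {d : ℕ}

def Decays (μ : AbsoluteValue R ℝ) (ρ : ℝ) (f : R⟦X⟧) : Prop :=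
  Tendsto (fun n => μ (coeff n f) * ρ ^ n) atTop (𝓝 0)

def IsGaussDegree (μ : AbsoluteValue R ℝ) (ρ : ℝ) (f : R⟦X⟧) (d : ℕ) : Prop :=
  IsGreatest {n | μ (coeff n f) * ρ ^ n = gaussNorm μ ρ f} d

noncomputable def gaussDegree (μ : AbsoluteValue R ℝ) (ρ : ℝ) (f : R⟦X⟧) : ℕ :=
  sSup {n | μ (coeff n f) * ρ ^ n = gaussNorm μ ρ f}

noncomputable def tailNorm (μ : AbsoluteValue R ℝ) (ρ : ℝ) (f : R⟦X⟧) (n : ℕ) : ℝ :=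
  ⨆ k, μ (coeff (k + n) f) * ρ ^ (k + n)

theorem IsGaussDegree.gaussDegree_eq (hd : IsGaussDegree μ ρ f d) : gaussDegree μ ρ f = d :=
  hd.csSup_eq

theorem Decays.le_gaussNorm (hf : Decays μ ρ f) (n : ℕ) :
    μ (coeff n f) * ρ ^ n ≤ gaussNorm μ ρ f :=
  PowerSeries.le_gaussNorm _ _ _ hf.bddAbove_range n

theorem abv_coeff_sub_mul_pow_le (hμ : IsNonarchimedean μ) (hρ : 0 ≤ ρ) (f g : R⟦X⟧)
    (n : ℕ) :
    μ (coeff n (f - g)) * ρ ^ n ≤ max (μ (coeff n f) * ρ ^ n) (μ (coeff n g) * ρ ^ n) := by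
  rw [map_sub, ← max_mul_of_nonneg _ _ (pow_nonneg hρ n)]
  gcongr
  simpa [sub_eq_add_neg, μ.map_neg] using hμ (coeff n f) (-coeff n g)

theorem abv_sum_coeff_mul_mul_pow_le (hμ : IsNonarchimedean μ) (hρ : 0 ≤ ρ) (f g : R⟦X⟧)
    {m : ℕ} {s : Finset (ℕ × ℕ)} (hs : ∀ q ∈ s, q.1 + q.2 = m) {B : ℝ} (hB : 0 ≤ B)
    (h : ∀ q ∈ s, μ (coeff q.1 f) * ρ ^ q.1 * (μ (coeff q.2 g) * ρ ^ q.2) ≤ B) :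
    μ (∑ q ∈ s, coeff q.1 f * coeff q.2 g) * ρ ^ m ≤ B := by
  rcases s.eq_empty_or_nonempty with rfl | hne
  · simpa using hB
  obtain ⟨q, hq, hle⟩ :=
    hμ.finset_image_add_of_nonempty (fun q => coeff q.1 f * coeff q.2 g) hne
  calc _ ≤ μ (coeff q.1 f * coeff q.2 g) * ρ ^ m := by gcongr
    _ = μ (coeff q.1 f) * ρ ^ q.1 * (μ (coeff q.2 g) * ρ ^ q.2) := by
      rw [map_mul, ← hs q hq, pow_add]; ring
    _ ≤ B := h q hq

theorem Decays.sub (hμ : IsNonarchimedean μ) (hρ : 0 ≤ ρ) (hf : Decays μ ρ f)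
    (hg : Decays μ ρ g) : Decays μ ρ (f - g) :=
  squeeze_zero (fun n => by positivity) (abv_coeff_sub_mul_pow_le hμ hρ f g)
    (by simpa using hf.max hg)

theorem Decays.mul (hμ : IsNonarchimedean μ) (hρ : 0 ≤ ρ) (hf : Decays μ ρ f)
    (hg : Decays μ ρ g) : Decays μ ρ (f * g) := by
  set A := gaussNorm μ ρ f + 1
  set B := gaussNorm μ ρ g + 1
  have hfA : ∀ n, μ (coeff n f) * ρ ^ n ≤ A := fun n => by
    linarith [hf.le_gaussNorm n]
  have hgB : ∀ n, μ (coeff n g) * ρ ^ n ≤ B := fun n => by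
    linarith [hg.le_gaussNorm n]
  have hA : 0 < A := by linarith [gaussNorm_nonneg _ ρ f μ.nonneg]
  have hB : 0 < B := by linarith [gaussNorm_nonneg _ ρ g μ.nonneg]
  refine tendsto_nhds_zero_of_forall_eventually_le (fun n => by positivity) fun ε hε => ?_
  obtain ⟨N₁, hN₁⟩ := eventually_atTop.1 (hf.eventually (ge_mem_nhds (div_pos hε hB)))
  obtain ⟨N₂, hN₂⟩ := eventually_atTop.1 (hg.eventually (ge_mem_nhds (div_pos hε hA)))
  refine eventually_atTop.2 ⟨N₁ + N₂, fun n hn => ?_⟩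
  rw [coeff_mul]
  refine abv_sum_coeff_mul_mul_pow_le hμ hρ f g (fun q hq => mem_antidiagonal.1 hq) hε.le
    fun q hq => ?_
  rcases le_or_gt N₁ q.1 with h | h
  · calc _ ≤ ε / B * B := mul_le_mul (hN₁ _ h) (hgB _) (by positivity) (by positivity)
      _ = ε := div_mul_cancel₀ _ hB.ne'
  · have : N₂ ≤ q.2 := by have := mem_antidiagonal.1 hq; omega
    calc _ ≤ A * (ε / A) := mul_le_mul (hfA _) (hN₂ _ this) (by positivity) hA.le
      _ = ε := mul_div_cancel₀ _ hA.ne'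

theorem Decays.exists_isGaussDegree (hρ : 0 < ρ) (hf : Decays μ ρ f) (hf0 : f ≠ 0) :
    ∃ d, IsGaussDegree μ ρ f d := by
  obtain ⟨n, hn⟩ : ∃ n, coeff n f ≠ 0 := by
    by_contra! h
    exact hf0 (ext fun n => by simp [h n])
  have hpos : 0 < gaussNorm μ ρ f :=
    (mul_pos (μ.pos hn) (pow_pos hρ n)).trans_le (hf.le_gaussNorm n)
  rw [gaussNorm_eq] at hpos
  simpa only [IsGaussDegree, gaussNorm_eq] using exists_isGreatest_eq_iSup_of_tendsto_zero hf hpos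

theorem IsGaussDegree.gaussNorm_pos (hρ : 0 ≤ ρ) (hf : Decays μ ρ f)
    (hd : IsGaussDegree μ ρ f d) : 0 < gaussNorm μ ρ f := by
  refine (gaussNorm_nonneg _ _ _ μ.nonneg).lt_of_ne fun h0 => ?_
  have : μ (coeff (d + 1) f) * ρ ^ (d + 1) = gaussNorm μ ρ f :=
    le_antisymm (hf.le_gaussNorm _) (by rw [← h0]; positivity)
  exact absurd (hd.2 this) (by omega)

theorem IsGaussDegree.coeff_ne_zero (hρ : 0 ≤ ρ) (hf : Decays μ ρ f)
    (hd : IsGaussDegree μ ρ f d) : coeff d f ≠ 0 := fun h0 => by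
  have h1 : μ (coeff d f) * ρ ^ d = gaussNorm μ ρ f := hd.1
  rw [h0, map_zero, zero_mul] at h1
  exact (hd.gaussNorm_pos hρ hf).ne h1

theorem IsGaussDegree.abv_coeff_mul_pow_lt (hf : Decays μ ρ f) (hd : IsGaussDegree μ ρ f d)
    {n : ℕ} (hn : d < n) : μ (coeff n f) * ρ ^ n < gaussNorm μ ρ f :=
  (hf.le_gaussNorm n).lt_of_ne fun h => (hd.2 h).not_gt hn

theorem tailNorm_nonneg (hρ : 0 ≤ ρ) (f : R⟦X⟧) (n : ℕ) : 0 ≤ tailNorm μ ρ f n :=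
  Real.iSup_nonneg fun _ => by positivity

theorem tailNorm_le {n : ℕ} {B : ℝ} (hB : 0 ≤ B)
    (h : ∀ m, n ≤ m → μ (coeff m f) * ρ ^ m ≤ B) : tailNorm μ ρ f n ≤ B :=
  Real.iSup_le (fun k => h _ (Nat.le_add_left n k)) hB

theorem Decays.le_tailNorm (hf : Decays μ ρ f) {n m : ℕ} (h : n ≤ m) :
    μ (coeff m f) * ρ ^ m ≤ tailNorm μ ρ f n := by
  obtain ⟨k, rfl⟩ := Nat.exists_eq_add_of_le' h
  exact le_ciSup (hf.bddAbove_range.mono (Set.range_comp_subset_range (· + n) _)) k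

theorem Decays.tailNorm_antitone (hρ : 0 ≤ ρ) (hf : Decays μ ρ f) :
    Antitone (tailNorm μ ρ f) :=
  fun _ _ h => tailNorm_le (tailNorm_nonneg hρ f _) fun _ hm => hf.le_tailNorm (h.trans hm)

theorem Decays.tailNorm_le_gaussNorm (hf : Decays μ ρ f) (n : ℕ) :
    tailNorm μ ρ f n ≤ gaussNorm μ ρ f :=
  tailNorm_le (gaussNorm_nonneg _ _ _ μ.nonneg) fun m _ => hf.le_gaussNorm m

theorem Decays.tendsto_tailNorm (hρ : 0 ≤ ρ) (hf : Decays μ ρ f) :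
    Tendsto (tailNorm μ ρ f) atTop (𝓝 0) :=
  tendsto_nhds_zero_of_forall_eventually_le (tailNorm_nonneg hρ f) fun ε hε => by
    obtain ⟨N, hN⟩ := eventually_atTop.1 (hf.eventually (ge_mem_nhds hε))
    exact eventually_atTop.2 ⟨N, fun n hn => tailNorm_le hε.le fun m hm => hN m (hn.trans hm)⟩

theorem IsGaussDegree.tailNorm_succ_lt (hρ : 0 ≤ ρ) (hf : Decays μ ρ f)
    (hd : IsGaussDegree μ ρ f d) : tailNorm μ ρ f (d + 1) < gaussNorm μ ρ f := by
  rcases (tailNorm_nonneg hρ f (d + 1)).eq_or_lt with h | h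
  · exact h ▸ hd.gaussNorm_pos hρ hf
  obtain ⟨k, hk⟩ := exists_eq_iSup_of_tendsto_zero ((tendsto_add_atTop_iff_nat (d + 1)).2 hf) h
  rw [tailNorm, ← hk]
  exact hd.abv_coeff_mul_pow_lt hf (by omega)

theorem tendsto_abv_coeff_mul {F : ℕ → R⟦X⟧}
    (hF : ∀ k, Tendsto (fun i => μ (coeff k (F i))) atTop (𝓝 0)) (g : R⟦X⟧) (m : ℕ) :
    Tendsto (fun i => μ (coeff m (F i * g))) atTop (𝓝 0) := by
  refine squeeze_zero (fun _ => μ.nonneg _) (fun i => ?_)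
    (by simpa using tendsto_finsetSum (antidiagonal m) fun q _ =>
      (hF q.1).mul_const (μ (coeff q.2 g)))
  rw [coeff_mul]
  exact (μ.sum_le _ _).trans_eq (sum_congr rfl fun q _ => map_mul μ _ _)

theorem exists_decays_tendsto_abv_coeff_sub_sum (hμ : IsNonarchimedean μ)
    (hcompl : μ.IsSeriesComplete) (hρ : 0 < ρ) {F : ℕ → R⟦X⟧} {a : ℕ → ℝ}
    (hF : ∀ l, Decays μ ρ (F l)) (hFa : ∀ l k, μ (coeff k (F l)) * ρ ^ k ≤ a l)
    (ha : Tendsto a atTop (𝓝 0)) :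
    ∃ z, Decays μ ρ z ∧
      ∀ k, Tendsto (fun i => μ (coeff k (z - ∑ l ∈ range i, F l))) atTop (𝓝 0) := by
  have hFa' : ∀ l k, μ (coeff k (F l)) ≤ a l / ρ ^ k := fun l k =>
    (le_div_iff₀ (pow_pos hρ k)).2 (hFa l k)
  choose s hs using fun k => hcompl _ <|
    squeeze_zero (fun _ => μ.nonneg _) (fun l => hFa' l k) (by simpa using ha.div_const (ρ ^ k))
  have hs' : ∀ k, Tendsto (fun i => μ (s k - ∑ l ∈ range i, coeff k (F l))) atTop (𝓝 0) :=
    fun k => (hs k).congr fun i => μ.map_sub _ _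
  refine ⟨mk s, ?_, fun k => by simpa [map_sum] using hs' k⟩
  refine tendsto_nhds_zero_of_forall_eventually_le (fun _ => by positivity) fun ε hε =>
    (eventually_forall_le_of_tendsto_zero hF hFa ha hε).mono fun k hk => ?_
  have hρk := pow_pos hρ k
  rw [coeff_mk, ← le_div_iff₀ hρk]
  exact μ.le_of_tendsto_sub (hs' k) (fun i => hμ.absoluteValue_sum_le (by positivity)
    fun l _ => (le_div_iff₀ hρk).2 (hk l)) tendsto_const_nhds

end Ring

section Field

variable {L : Type*} [Field L] {μ : AbsoluteValue L ℝ} {ρ : ℝ} {x y f : L⟦X⟧} {d : ℕ}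

/-- The part of `f` of degree `≥ d`, divided by the monomial `x_d X^d`. -/
noncomputable def leadQuot (x : L⟦X⟧) (d : ℕ) (f : L⟦X⟧) : L⟦X⟧ :=
  mk fun k => coeff (k + d) f / coeff d x

noncomputable def divStep (x : L⟦X⟧) (d : ℕ) (f : L⟦X⟧) : L⟦X⟧ :=
  f - leadQuot x d f * x

theorem abv_coeff_leadQuot_mul_pow (hρ : ρ ≠ 0) (hd : IsGaussDegree μ ρ x d) (f : L⟦X⟧)
    (k : ℕ) : μ (coeff k (leadQuot x d f)) * ρ ^ k =
      μ (coeff (k + d) f) * ρ ^ (k + d) / gaussNorm μ ρ x := by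
  have hΛ : μ (coeff d x) * ρ ^ d = gaussNorm μ ρ x := hd.1
  rw [← hΛ, leadQuot, coeff_mk, map_div₀, pow_add]
  rcases eq_or_ne (μ (coeff d x)) 0 with h | h
  · simp [h]
  · field_simp

theorem Decays.leadQuot (hρ : ρ ≠ 0) (hd : IsGaussDegree μ ρ x d) (hf : Decays μ ρ f) :
    Decays μ ρ (leadQuot x d f) := by
  simp only [Decays, abv_coeff_leadQuot_mul_pow hρ hd]
  simpa using ((tendsto_add_atTop_iff_nat d).2 hf).div_const (gaussNorm μ ρ x)

theorem abv_coeff_leadQuot_mul_pow_le (hρ : 0 < ρ) (hd : IsGaussDegree μ ρ x d)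
    (hf : Decays μ ρ f) (k : ℕ) :
    μ (coeff k (leadQuot x d f)) * ρ ^ k ≤ tailNorm μ ρ f d / gaussNorm μ ρ x := by
  rw [abv_coeff_leadQuot_mul_pow hρ.ne' hd]
  gcongr
  · exact gaussNorm_nonneg _ _ _ μ.nonneg
  · exact hf.le_tailNorm (Nat.le_add_left d k)

theorem abv_coeff_leadQuot_mul_mul_pow_le (hμ : IsNonarchimedean μ) (hρ : 0 < ρ)
    (hx : Decays μ ρ x) (hd : IsGaussDegree μ ρ x d) (hf : Decays μ ρ f) (m : ℕ) :
    μ (coeff m (leadQuot x d f * x)) * ρ ^ m ≤ tailNorm μ ρ f d := by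
  have hΛ := hd.gaussNorm_pos hρ.le hx
  rw [coeff_mul]
  refine abv_sum_coeff_mul_mul_pow_le hμ hρ.le _ _ (fun q hq => mem_antidiagonal.1 hq)
    (tailNorm_nonneg hρ.le f d) fun q _ => ?_
  calc _ ≤ tailNorm μ ρ f d / gaussNorm μ ρ x * gaussNorm μ ρ x :=
        mul_le_mul (abv_coeff_leadQuot_mul_pow_le hρ hd hf _) (hx.le_gaussNorm _)
          (by positivity) (div_nonneg (tailNorm_nonneg hρ.le f d) hΛ.le)
    _ = tailNorm μ ρ f d := div_mul_cancel₀ _ hΛ.ne'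

/-- The coefficient `f_m` cancels. In the remaining products `(leadQuot x d f)_i x_j`, either
`j > d`, which brings in the factor `tailNorm x (d + 1) / gaussNorm x`, or `j < d`, and then
`i + d > m`. -/
theorem abv_coeff_divStep_mul_pow_le (hμ : IsNonarchimedean μ) (hρ : 0 < ρ)
    (hx : Decays μ ρ x) (hd : IsGaussDegree μ ρ x d) (hf : Decays μ ρ f) {m : ℕ}
    (hm : d ≤ m) : μ (coeff m (divStep x d f)) * ρ ^ m ≤
      max (tailNorm μ ρ x (d + 1) / gaussNorm μ ρ x * tailNorm μ ρ f d)
        (tailNorm μ ρ f (m + 1)) := by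
  have hΛ := hd.gaussNorm_pos hρ.le hx
  have hmem : (m - d, d) ∈ antidiagonal m := mem_antidiagonal.2 (by omega)
  have hcoeff : coeff m (divStep x d f) =
      -∑ q ∈ (antidiagonal m).erase (m - d, d), coeff q.1 (leadQuot x d f) * coeff q.2 x := by
    rw [divStep, map_sub, coeff_mul, ← sum_erase_add _ _ hmem, leadQuot, coeff_mk,
      Nat.sub_add_cancel hm, div_mul_cancel₀ _ (hd.coeff_ne_zero hρ.le hx)]
    ring
  have hT := tailNorm_nonneg (μ := μ) hρ.le f
  rw [hcoeff, μ.map_neg]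
  refine abv_sum_coeff_mul_mul_pow_le hμ hρ.le _ _
    (fun q hq => mem_antidiagonal.1 (mem_of_mem_erase hq))
    (le_max_of_le_right (hT _)) fun q hq => ?_
  have hqm := mem_antidiagonal.1 (mem_of_mem_erase hq)
  have hq₂ : q.2 ≠ d := fun h => ne_of_mem_erase hq (Prod.ext (by omega) h)
  rcases hq₂.lt_or_gt with h | h
  · refine le_max_of_le_right ?_
    calc _ ≤ tailNorm μ ρ f (m + 1) / gaussNorm μ ρ x * gaussNorm μ ρ x := by
          refine mul_le_mul ?_ (hx.le_gaussNorm _) (by positivity) (div_nonneg (hT _) hΛ.le)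
          rw [abv_coeff_leadQuot_mul_pow hρ.ne' hd]
          gcongr
          exact hf.le_tailNorm (by omega)
      _ = _ := div_mul_cancel₀ _ hΛ.ne'
  · refine le_max_of_le_left ?_
    calc _ ≤ tailNorm μ ρ f d / gaussNorm μ ρ x * tailNorm μ ρ x (d + 1) :=
          mul_le_mul (abv_coeff_leadQuot_mul_pow_le hρ hd hf _) (hx.le_tailNorm h)
            (by positivity) (div_nonneg (hT _) hΛ.le)
      _ = _ := by ring

theorem tailNorm_divStep_le (hμ : IsNonarchimedean μ) (hρ : 0 < ρ) (hx : Decays μ ρ x)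
    (hd : IsGaussDegree μ ρ x d) (hf : Decays μ ρ f) {n : ℕ} (hn : d ≤ n) :
    tailNorm μ ρ (divStep x d f) n ≤
      max (tailNorm μ ρ x (d + 1) / gaussNorm μ ρ x * tailNorm μ ρ f d)
        (tailNorm μ ρ f (n + 1)) :=
  tailNorm_le (le_max_of_le_right (tailNorm_nonneg hρ.le f _)) fun _ hm =>
    (abv_coeff_divStep_mul_pow_le hμ hρ hx hd hf (hn.trans hm)).trans
      (max_le_max le_rfl (hf.tailNorm_antitone hρ.le (by omega)))

theorem gaussNorm_divStep_le (hμ : IsNonarchimedean μ) (hρ : 0 < ρ) (hx : Decays μ ρ x)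
    (hd : IsGaussDegree μ ρ x d) (hf : Decays μ ρ f) :
    gaussNorm μ ρ (divStep x d f) ≤ gaussNorm μ ρ f := by
  rw [gaussNorm_eq μ ρ (divStep x d f)]
  exact Real.iSup_le (fun m => (abv_coeff_sub_mul_pow_le hμ hρ.le _ _ m).trans
    (max_le (hf.le_gaussNorm m) ((abv_coeff_leadQuot_mul_mul_pow_le hμ hρ hx hd hf m).trans
      (hf.tailNorm_le_gaussNorm d)))) (gaussNorm_nonneg _ _ _ μ.nonneg)

theorem decays_divStep (hμ : IsNonarchimedean μ) (hρ : 0 < ρ) (hx : Decays μ ρ x)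
    (hd : IsGaussDegree μ ρ x d) (hf : Decays μ ρ f) : Decays μ ρ (divStep x d f) :=
  hf.sub hμ hρ.le ((hf.leadQuot hρ.ne' hd).mul hμ hρ.le hx)

noncomputable def divIter (x : L⟦X⟧) (d : ℕ) (y : L⟦X⟧) (i : ℕ) : L⟦X⟧ :=
  (divStep x d)^[i] y

theorem divIter_succ (i : ℕ) : divIter x d y (i + 1) = divStep x d (divIter x d y i) :=
  Function.iterate_succ_apply' _ _ _

theorem divIter_eq_sub (i : ℕ) :
    divIter x d y i = y - (∑ l ∈ range i, leadQuot x d (divIter x d y l)) * x := by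
  induction i with
  | zero => simp [divIter]
  | succ i ih => rw [divIter_succ, divStep, sum_range_succ, add_mul, ← sub_sub, ← ih]

section Iteration

variable (hμ : IsNonarchimedean μ) (hρ : 0 < ρ) (hx : Decays μ ρ x)
  (hd : IsGaussDegree μ ρ x d) (hy : Decays μ ρ y)
include hμ hρ hx hd hy

theorem decays_divIter (i : ℕ) : Decays μ ρ (divIter x d y i) := by
  induction i with
  | zero => exact hy
  | succ i ih => rw [divIter_succ]; exact decays_divStep hμ hρ hx hd ih

theorem gaussNorm_divIter_le (i : ℕ) :
    gaussNorm μ ρ (divIter x d y i) ≤ gaussNorm μ ρ y := by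
  induction i with
  | zero => exact le_rfl
  | succ i ih =>
    rw [divIter_succ]
    exact (gaussNorm_divStep_le hμ hρ hx hd (decays_divIter hμ hρ hx hd hy i)).trans ih

theorem tailNorm_divIter_add_le (i j : ℕ) {n : ℕ} (hn : d ≤ n) :
    tailNorm μ ρ (divIter x d y (i + j)) n ≤
      max (tailNorm μ ρ x (d + 1) / gaussNorm μ ρ x * tailNorm μ ρ (divIter x d y i) d)
        (tailNorm μ ρ (divIter x d y i) (j + n)) := by
  set c := tailNorm μ ρ x (d + 1) / gaussNorm μ ρ x
  have hΛ := hd.gaussNorm_pos hρ.le hx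
  have hc0 : 0 ≤ c := div_nonneg (tailNorm_nonneg hρ.le x _) hΛ.le
  have hc1 : c ≤ 1 := (div_le_one hΛ).2 (hd.tailNorm_succ_lt hρ.le hx).le
  have hY := decays_divIter hμ hρ hx hd hy
  induction j generalizing n with
  | zero => exact le_max_of_le_right (by rw [add_zero, zero_add])
  | succ j ih =>
    have hM : tailNorm μ ρ (divIter x d y (i + j)) d ≤ tailNorm μ ρ (divIter x d y i) d :=
      (ih le_rfl).trans (max_le (mul_le_of_le_one_left (tailNorm_nonneg hρ.le _ _) hc1)
        ((hY i).tailNorm_antitone hρ.le (by omega)))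
    rw [← add_assoc, divIter_succ]
    calc _ ≤ max (c * tailNorm μ ρ (divIter x d y (i + j)) d)
          (tailNorm μ ρ (divIter x d y (i + j)) (n + 1)) :=
          tailNorm_divStep_le hμ hρ hx hd (hY _) hn
      _ ≤ max (c * tailNorm μ ρ (divIter x d y i) d)
          (max (c * tailNorm μ ρ (divIter x d y i) d)
            (tailNorm μ ρ (divIter x d y i) (j + (n + 1)))) :=
          max_le_max (mul_le_mul_of_nonneg_left hM hc0) (ih (by omega))
      _ = _ := by rw [← max_assoc, max_self, show j + (n + 1) = j + 1 + n by omega]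

theorem tendsto_tailNorm_divIter :
    Tendsto (fun i => tailNorm μ ρ (divIter x d y i) d) atTop (𝓝 0) := by
  have hΛ := hd.gaussNorm_pos hρ.le hx
  have hc1 : tailNorm μ ρ x (d + 1) / gaussNorm μ ρ x < 1 :=
    (div_lt_one hΛ).2 (hd.tailNorm_succ_lt hρ.le hx)
  have hY := decays_divIter hμ hρ hx hd hy
  refine tendsto_zero_of_antitone_of_le_max (antitone_nat_of_succ_le fun i => ?_)
    (fun i => tailNorm_nonneg hρ.le _ d) hc1
    (fun i => (tendsto_add_atTop_iff_nat d).2 ((hY i).tendsto_tailNorm hρ.le))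
    fun i j => tailNorm_divIter_add_le hμ hρ hx hd hy i j le_rfl
  refine (tailNorm_divIter_add_le hμ hρ hx hd hy i 1 le_rfl).trans
    (max_le (mul_le_of_le_one_left (tailNorm_nonneg hρ.le _ _) hc1.le)
      ((hY i).tailNorm_antitone hρ.le (by omega)))

end Iteration

theorem exists_eq_mul_add_of_isGaussDegree (hμ : IsNonarchimedean μ)
    (hcompl : μ.IsSeriesComplete) (hρ : 0 < ρ) (hx : Decays μ ρ x)
    (hd : IsGaussDegree μ ρ x d) (hy : Decays μ ρ y) :
    ∃ z w, Decays μ ρ z ∧ Decays μ ρ w ∧ y = z * x + w ∧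
      gaussNorm μ ρ w ≤ gaussNorm μ ρ y ∧ ∀ m, d ≤ m → coeff m w = 0 := by
  have hY := decays_divIter hμ hρ hx hd hy
  have hM := tendsto_tailNorm_divIter hμ hρ hx hd hy
  obtain ⟨z, hz, hzlim⟩ := exists_decays_tendsto_abv_coeff_sub_sum hμ hcompl hρ
    (fun l => (hY l).leadQuot hρ.ne' hd) (fun l k => abv_coeff_leadQuot_mul_pow_le hρ hd (hY l) k)
    (by simpa using hM.div_const (gaussNorm μ ρ x))
  have hlim : ∀ m, Tendsto (fun i => μ (coeff m (y - z * x) - coeff m (divIter x d y i)))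
      atTop (𝓝 0) := fun m =>
    (tendsto_abv_coeff_mul hzlim x m).congr fun i => by
      rw [divIter_eq_sub, μ.map_sub, ← map_sub]
      congr 2
      ring
  refine ⟨z, y - z * x, hz, hy.sub hμ hρ.le (hz.mul hμ hρ.le hx), by ring, ?_,
    fun m hm => ?_⟩
  · rw [gaussNorm_eq μ ρ (y - z * x)]
    refine Real.iSup_le (fun m => ?_) (gaussNorm_nonneg _ _ _ μ.nonneg)
    rw [← le_div_iff₀ (pow_pos hρ m)]
    exact μ.le_of_tendsto_sub (hlim m) (fun i => (le_div_iff₀ (pow_pos hρ m)).2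
      (((hY i).le_gaussNorm m).trans (gaussNorm_divIter_le hμ hρ hx hd hy i))) tendsto_const_nhds
  · refine μ.eq_zero.1 (le_antisymm ?_ (μ.nonneg _))
    exact μ.le_of_tendsto_sub (hlim m) (fun i => (le_div_iff₀ (pow_pos hρ m)).2
      ((hY i).le_tailNorm hm)) (by simpa using hM.div_const (ρ ^ m))

theorem exists_eq_mul_add (hμ : IsNonarchimedean μ) (hcompl : μ.IsSeriesComplete) (hρ : 0 < ρ)
    (hx : Decays μ ρ x) (hx0 : x ≠ 0) (hy : Decays μ ρ y) :
    ∃ z w, Decays μ ρ z ∧ Decays μ ρ w ∧ y = z * x + w ∧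
      gaussNorm μ ρ w ≤ gaussNorm μ ρ y ∧
      (w = 0 ∨ ∀ dw dx, IsGaussDegree μ ρ w dw → IsGaussDegree μ ρ x dx → dw < dx) := by
  obtain ⟨d, hd⟩ := hx.exists_isGaussDegree hρ hx0
  obtain ⟨z, w, hz, hw, hyzw, hgw, hcoeff⟩ :=
    exists_eq_mul_add_of_isGaussDegree hμ hcompl hρ hx hd hy
  refine ⟨z, w, hz, hw, hyzw, hgw, or_iff_not_imp_left.2 fun _ dw dx hdw hdx => ?_⟩
  rw [hdx.unique hd]
  by_contra! h
  exact hdw.coeff_ne_zero hρ.le hw (hcoeff dw h)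

theorem isPrincipalIdealRing_of_coe_eq (hμ : IsNonarchimedean μ) (hcompl : μ.IsSeriesComplete)
    (hρ : 0 < ρ) (S : Subring L⟦X⟧) (hS : (S : Set L⟦X⟧) = {f | Decays μ ρ f}) :
    IsPrincipalIdealRing S := by
  have hmem : ∀ {f}, f ∈ S ↔ Decays μ ρ f := by
    intro f
    rw [← SetLike.mem_coe, hS]
    rfl
  refine .of_exists_eq_mul_add (fun f => gaussDegree μ ρ (f : L⟦X⟧)) fun x y hx0 => ?_
  obtain ⟨z, w, hz, hw, hyzw, -, hdeg⟩ := exists_eq_mul_add hμ hcompl hρ (hmem.1 x.2)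
    (fun h => hx0 (Subtype.ext h)) (hmem.1 y.2)
  refine ⟨⟨z, hmem.2 hz⟩, ⟨w, hmem.2 hw⟩, Subtype.ext hyzw, ?_⟩
  by_cases hw0 : w = 0
  · exact .inl (Subtype.ext hw0)
  obtain ⟨dw, hdw⟩ := hw.exists_isGaussDegree hρ hw0
  obtain ⟨dx, hdx⟩ := (hmem.1 x.2).exists_isGaussDegree hρ fun h => hx0 (Subtype.ext h)
  refine .inr ?_
  simp only [hdw.gaussDegree_eq, hdx.gaussDegree_eq]
  exact (hdeg.resolve_left hw0) dw dx hdw hdx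

end Field

end PowerSeries

section NonarchimedeanRpow

variable {L : Type*} [Field L] {ν : L → ℝ} {r : ℝ}

theorem rpow_apply_add_le_max (hnonneg : ∀ a, 0 ≤ ν a)
    (hadd : ∀ a b, ν (a + b) ≤ max (ν a) (ν b)) (hr : 0 ≤ r) (a b : L) :
    ν (a + b) ^ r ≤ max (ν a ^ r) (ν b ^ r) :=
  (Real.rpow_le_rpow (hnonneg _) (hadd a b) hr).trans_eq
    (Real.rpow_max (hnonneg a) (hnonneg b) hr)

noncomputable def nonarchRpowAbv (ν : L → ℝ) (hnonneg : ∀ a, 0 ≤ ν a)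
    (hzero : ∀ a, ν a = 0 ↔ a = 0) (hmul : ∀ a b, ν (a * b) = ν a * ν b)
    (hadd : ∀ a b, ν (a + b) ≤ max (ν a) (ν b)) (hr : 0 < r) : AbsoluteValue L ℝ where
  toFun a := ν a ^ r
  map_mul' a b := by rw [hmul, Real.mul_rpow (hnonneg a) (hnonneg b)]
  nonneg' a := Real.rpow_nonneg (hnonneg a) r
  eq_zero' a := by rw [Real.rpow_eq_zero (hnonneg a) hr.ne', hzero]
  add_le' a b := (rpow_apply_add_le_max hnonneg hadd hr.le a b).trans
    (max_le_add_of_nonneg (Real.rpow_nonneg (hnonneg a) r) (Real.rpow_nonneg (hnonneg b) r))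

theorem isNonarchimedean_nonarchRpowAbv (hnonneg : ∀ a, 0 ≤ ν a)
    (hzero : ∀ a, ν a = 0 ↔ a = 0) (hmul : ∀ a b, ν (a * b) = ν a * ν b)
    (hadd : ∀ a b, ν (a + b) ≤ max (ν a) (ν b)) (hr : 0 < r) :
    IsNonarchimedean (nonarchRpowAbv ν hnonneg hzero hmul hadd hr) :=
  rpow_apply_add_le_max hnonneg hadd hr.le

variable {μ : AbsoluteValue L ℝ} {p : ℝ}

theorem isSeriesComplete_of_cauchy (hnonneg : ∀ a, 0 ≤ ν a) (hr : 0 < r)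
    (hμν : ∀ a, μ a = ν a ^ r) (hμ : IsNonarchimedean μ)
    (hcomplete : ∀ f : ℕ → L,
      (∀ ε : ℝ, 0 < ε → ∃ N : ℕ, ∀ m ≥ N, ∀ k ≥ N, ν (f m - f k) < ε) →
      ∃ l : L, Tendsto (fun n => ν (f n - l)) atTop (nhds 0)) :
    μ.IsSeriesComplete := by
  intro t ht
  have hsmall : ∀ ε > 0, ∃ N, ∀ m ≥ N, ∀ k, m ≤ k →
      μ (∑ i ∈ range k, t i - ∑ i ∈ range m, t i) < ε := fun ε hε => by
    obtain ⟨N, hN⟩ := eventually_atTop.1 (ht.eventually (ge_mem_nhds (half_pos hε)))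
    refine ⟨N, fun m hm k hk => ?_⟩
    rw [← sum_Ico_eq_sub _ hk]
    exact (hμ.absoluteValue_sum_le (half_pos hε).le fun i hi =>
      hN i (hm.trans (mem_Ico.1 hi).1)).trans_lt (half_lt_self hε)
  obtain ⟨l, hl⟩ := hcomplete (fun n => ∑ i ∈ range n, t i) fun ε hε => by
    obtain ⟨N, hN⟩ := hsmall (ε ^ r) (Real.rpow_pos_of_pos hε r)
    refine ⟨N, fun m hm k hk => (Real.rpow_lt_rpow_iff (hnonneg _) hε.le hr).1 ?_⟩
    rw [← hμν]
    rcases le_total m k with h | h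
    · rw [μ.map_sub]
      exact hN m hm k h
    · exact hN k hk m h
  refine ⟨l, ?_⟩
  simpa [hμν, Real.zero_rpow hr.ne'] using hl.rpow_const (Or.inr hr.le)

theorem rpow_neg_natCast_mul_rpow_eq (hp : 0 < p) (hμν : ∀ a, μ a = ν a ^ r) (a : L)
    (n : ℕ) :
    p ^ (-(n : ℝ)) * ν a ^ r = μ a * p⁻¹ ^ n := by
  rw [Real.rpow_neg hp.le, Real.rpow_natCast, inv_pow, hμν, mul_comm]

theorem decaysPS_iff (hp : 0 < p) (hμν : ∀ a, μ a = ν a ^ r) (f : L⟦X⟧) :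
    decaysPS ν p r f ↔ Decays μ p⁻¹ f := by
  simp only [decaysPS, rpow_neg_natCast_mul_rpow_eq hp hμν]
  rfl

theorem gaussPS_eq (hp : 0 < p) (hμν : ∀ a, μ a = ν a ^ r) (f : L⟦X⟧) :
    gaussPS ν p r f = gaussNorm μ p⁻¹ f := by
  simp only [gaussPS, rpow_neg_natCast_mul_rpow_eq hp hμν, gaussNorm_eq]

theorem isDegPS_iff (hp : 0 < p) (hμν : ∀ a, μ a = ν a ^ r) (f : L⟦X⟧) (d : ℕ) :
    isDegPS ν p r f d ↔ IsGaussDegree μ p⁻¹ f d := by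
  simp only [isDegPS, gaussPS_eq hp hμν, rpow_neg_natCast_mul_rpow_eq hp hμν]
  rfl

end NonarchimedeanRpow

theorem stmt_8_general {L : Type*} [Field L] (ν : L → ℝ)
    (hnonneg : ∀ a : L, 0 ≤ ν a)
    (hzero : ∀ a : L, ν a = 0 ↔ a = 0)
    (hmul : ∀ a b : L, ν (a * b) = ν a * ν b)
    (hadd : ∀ a b : L, ν (a + b) ≤ max (ν a) (ν b))
    (hcomplete : ∀ f : ℕ → L,
      (∀ ε : ℝ, 0 < ε → ∃ N : ℕ, ∀ m ≥ N, ∀ k ≥ N, ν (f m - f k) < ε) →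
      ∃ l : L, Tendsto (fun n => ν (f n - l)) atTop (nhds 0))
    (p r : ℝ) (hp : 1 < p) (hr : 0 < r) :
    (∀ x y : PowerSeries L, decaysPS ν p r x → decaysPS ν p r y → x ≠ 0 →
      ∃ z w : PowerSeries L, decaysPS ν p r z ∧ decaysPS ν p r w ∧
        y = z * x + w ∧ gaussPS ν p r w ≤ gaussPS ν p r y ∧
        (w = 0 ∨ ∀ dw dx : ℕ, isDegPS ν p r w dw → isDegPS ν p r x dx → dw < dx)) ∧
    ∀ S : Subring (PowerSeries L), (S : Set (PowerSeries L)) = {x | decaysPS ν p r x} →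
      IsPrincipalIdealRing S := by
  set μ := nonarchRpowAbv ν hnonneg hzero hmul hadd hr
  have hμν : ∀ a, μ a = ν a ^ r := fun _ => rfl
  have hμ := isNonarchimedean_nonarchRpowAbv hnonneg hzero hmul hadd hr
  have hcompl := isSeriesComplete_of_cauchy hnonneg hr hμν hμ hcomplete
  have hp0 : 0 < p := one_pos.trans hp
  have hρ : 0 < p⁻¹ := inv_pos.2 hp0
  refine ⟨fun x y hx hy hx0 => ?_, fun S hS => ?_⟩
  · simp only [decaysPS_iff hp0 hμν, gaussPS_eq hp0 hμν, isDegPS_iff hp0 hμν] at hx hy ⊢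
    exact exists_eq_mul_add hμ hcompl hρ hx hx0 hy
  · exact isPrincipalIdealRing_of_coe_eq hμ hcompl hρ S
      (hS.trans (Set.ext fun f => decaysPS_iff hp0 hμν f))

/-- Euclidean division in the ring `A` of decaying power series over a complete
nontrivially normed field: for `x ≠ 0` and any `y` there are `z, w` in `A` with
`y = z x + w`, `λ_r(w) ≤ λ_r(y)`, and `deg w < deg x` (with `deg 0 = -∞`).
Consequently `A` is a Euclidean domain for `deg`, hence a principal ideal domain. -/
theorem stmt_8 {L : Type*} [Field L] (ν : L → ℝ)
    (hnonneg : ∀ a : L, 0 ≤ ν a)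
    (hzero : ∀ a : L, ν a = 0 ↔ a = 0)
    (hmul : ∀ a b : L, ν (a * b) = ν a * ν b)
    (hadd : ∀ a b : L, ν (a + b) ≤ max (ν a) (ν b))
    (hnontriv : ∃ a : L, a ≠ 0 ∧ ν a ≠ 1)
    (hcomplete : ∀ f : ℕ → L,
      (∀ ε : ℝ, 0 < ε → ∃ N : ℕ, ∀ m ≥ N, ∀ k ≥ N, ν (f m - f k) < ε) →
      ∃ l : L, Tendsto (fun n => ν (f n - l)) atTop (nhds 0))
    (p r : ℝ) (hp : 1 < p) (hr : 0 < r) :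
    (∀ x y : PowerSeries L, decaysPS ν p r x → decaysPS ν p r y → x ≠ 0 →
      ∃ z w : PowerSeries L, decaysPS ν p r z ∧ decaysPS ν p r w ∧
        y = z * x + w ∧ gaussPS ν p r w ≤ gaussPS ν p r y ∧
        (w = 0 ∨ ∀ dw dx : ℕ, isDegPS ν p r w dw → isDegPS ν p r x dx → dw < dx)) ∧
    ∀ S : Subring (PowerSeries L), (S : Set (PowerSeries L)) = {x | decaysPS ν p r x} →
      IsPrincipalIdealRing S :=
  stmt_8_general ν hnonneg hzero hmul hadd hcomplete p r hp hr
end
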